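/- arXiv:2410.12008 — 2 statements merged into one kernel-verified Lean document; each statement's English description precedes it below -/
import Mathlib

section
/- Fix an integer r ≥ 0 and real numbers A > 0 and α₀ > 0. Let (f_n)_{n≥1} be a sequence of monic polynomials in ℝ[X] such that every root of every f_n is real and lies in the interval [−A, A], and write d_n = deg f_n. Assume d_n → ∞ as n → ∞, that p_1(f_n) = o(d_n^{1/3}), that p_3(f_n) = o(d_n), and that p_2(f_n) ≥ α₀²·d_n for all n. Then c_{2r+1}(f_n) = c_1(f_n)·((−1)^r/(2r)!!)·(p_2(f_n))^r + o(d_n^{r}) as n → ∞. -/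
open Polynomial Filter Asymptotics Finset

/-- Newton's identity for the multiset of values. -/
theorem newton_multiset (s : Multiset ℝ) (k : ℕ) :
    (k : ℝ) * s.esymm k = (-1) ^ (k + 1) *
      ∑ a ∈ Finset.HasAntidiagonal.antidiagonal k with a.1 < k,
        (-1 : ℝ) ^ a.1 * s.esymm a.1 * (s.map (fun x => x ^ a.2)).sum := by
  classical
  obtain ⟨l, rfl⟩ : ∃ l : List ℝ, (l : Multiset ℝ) = s := ⟨s.toList, s.coe_toList⟩
  have h := congrArg (MvPolynomial.aeval l.get)
    (MvPolynomial.mul_esymm_eq_sum (Fin l.length) ℝ k)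
  have huniv : (Finset.univ.val.map l.get : Multiset ℝ) = (l : Multiset ℝ) := by
    rw [Fin.univ_val_map, List.ofFn_get]
  have hes : ∀ m : ℕ, MvPolynomial.aeval l.get (MvPolynomial.esymm (Fin l.length) ℝ m)
      = Multiset.esymm (l : Multiset ℝ) m := by
    intro m
    rw [MvPolynomial.aeval_esymm_eq_multiset_esymm, huniv]
  have hps : ∀ m : ℕ, MvPolynomial.aeval l.get (MvPolynomial.psum (Fin l.length) ℝ m)
      = ((l : Multiset ℝ).map (fun x => x ^ m)).sum := by
    intro m
    rw [MvPolynomial.psum, map_sum]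
    simp only [map_pow, MvPolynomial.aeval_X]
    rw [← huniv, Multiset.map_map, Finset.sum]
    rfl
  simpa only [map_mul, map_sum, map_pow, map_neg, map_one, map_natCast, hes, hps] using h
theorem newton_range (s : Multiset ℝ) (k : ℕ) :
    (k : ℝ) * s.esymm k =
      ∑ i ∈ Finset.range k,
        (-1 : ℝ) ^ (k + 1 + i) * s.esymm i * (s.map (fun x => x ^ (k - i))).sum := by
  rw [newton_multiset, Finset.sum_filter, Finset.Nat.sum_antidiagonal_eq_sum_range_succ_mk,
    Finset.sum_range_succ, if_neg (lt_irrefl k), add_zero, Finset.mul_sum]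
  refine Finset.sum_congr rfl fun i hi => ?_
  rw [if_pos (Finset.mem_range.mp hi), pow_add, pow_add]
  ring

variable {D : ℕ → ℝ} {f g : ℕ → ℝ}

theorem scale_le (hD : Tendsto D atTop atTop) {x y : ℝ} (hxy : x ≤ y) :
    (fun n => D n ^ x) =O[atTop] fun n => D n ^ y := by
  rw [isBigO_iff]
  refine ⟨1, ?_⟩
  filter_upwards [hD.eventually_ge_atTop 1] with n hn
  have h0 : (0:ℝ) ≤ D n ^ x := Real.rpow_nonneg (le_trans zero_le_one hn) _
  have h1 : (0:ℝ) ≤ D n ^ y := Real.rpow_nonneg (le_trans zero_le_one hn) _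
  rw [Real.norm_eq_abs, Real.norm_eq_abs, abs_of_nonneg h0, abs_of_nonneg h1, one_mul]
  exact Real.rpow_le_rpow_of_exponent_le hn hxy

theorem scale_lt (hD : Tendsto D atTop atTop) {x y : ℝ} (hxy : x < y) :
    (fun n => D n ^ x) =o[atTop] fun n => D n ^ y := by
  refine (isLittleO_iff_tendsto' ?_).mpr ?_
  · filter_upwards [hD.eventually_ge_atTop 1] with n hn h0
    exact absurd h0 (by positivity)
  · have ht : Tendsto (fun n => D n ^ (x - y)) atTop (nhds 0) := by
      have h2 := (tendsto_rpow_neg_atTop (show (0:ℝ) < y - x by linarith)).comp hD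
      refine h2.congr fun n => ?_
      simp only [Function.comp_apply, neg_sub]
    refine ht.congr' ?_
    filter_upwards [hD.eventually_ge_atTop 1] with n hn
    rw [← Real.rpow_sub (lt_of_lt_of_le zero_lt_one hn)]

theorem mul_OO (hD : Tendsto D atTop atTop) {x y : ℝ}
    (hf : f =O[atTop] fun n => D n ^ x) (hg : g =O[atTop] fun n => D n ^ y) :
    (fun n => f n * g n) =O[atTop] fun n => D n ^ (x + y) := by
  refine (hf.mul hg).congr' EventuallyEq.rfl ?_
  filter_upwards [hD.eventually_ge_atTop 1] with n hn
  rw [← Real.rpow_add (lt_of_lt_of_le zero_lt_one hn)]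

theorem mul_oO (hD : Tendsto D atTop atTop) {x y : ℝ}
    (hf : f =o[atTop] fun n => D n ^ x) (hg : g =O[atTop] fun n => D n ^ y) :
    (fun n => f n * g n) =o[atTop] fun n => D n ^ (x + y) := by
  refine (hf.mul_isBigO hg).congr' EventuallyEq.rfl ?_
  filter_upwards [hD.eventually_ge_atTop 1] with n hn
  rw [← Real.rpow_add (lt_of_lt_of_le zero_lt_one hn)]

theorem mul_Oo (hD : Tendsto D atTop atTop) {x y : ℝ}
    (hf : f =O[atTop] fun n => D n ^ x) (hg : g =o[atTop] fun n => D n ^ y) :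
    (fun n => f n * g n) =o[atTop] fun n => D n ^ (x + y) := by
  refine (hf.mul_isLittleO hg).congr' EventuallyEq.rfl ?_
  filter_upwards [hD.eventually_ge_atTop 1] with n hn
  rw [← Real.rpow_add (lt_of_lt_of_le zero_lt_one hn)]

theorem rpow_natCast_fun (D : ℕ → ℝ) (m : ℕ) :
    (fun n => D n ^ (m : ℝ)) = fun n => D n ^ m := by
  funext n; exact Real.rpow_natCast _ _

theorem p_bigO (A : ℝ) (hA : 0 < A) (f : ℕ → Polynomial ℝ)
    (hsplit : ∀ n, Multiset.card (f n).roots = (f n).natDegree)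
    (hroots : ∀ n, ∀ x ∈ (f n).roots, x ∈ Set.Icc (-A) A) (j : ℕ) :
    (fun n => ((f n).roots.map (fun x => x ^ j)).sum) =O[atTop]
      fun n => ((f n).natDegree : ℝ) ^ ((1:ℝ)) := by
  rw [isBigO_iff]
  refine ⟨A ^ j ⊔ 1, Eventually.of_forall fun n => ?_⟩
  have h1 : |((f n).roots.map (fun x => x ^ j)).sum| ≤ (((f n).roots.map (fun x => x ^ j)).map abs).sum := by
    simpa using Multiset.abs_sum_le_sum_abs (s := (f n).roots.map (fun x => x ^ j))
  have h2 : (((f n).roots.map (fun x => x ^ j)).map abs).sum ≤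
      ((f n).roots.map (fun _ => A ^ j ⊔ 1)).sum := by
    rw [Multiset.map_map]
    refine Multiset.sum_map_le_sum_map _ _ fun x hx => ?_
    have hxA : |x| ≤ A := by
      rcases hroots n x hx with ⟨h3, h4⟩
      exact abs_le.mpr ⟨h3, h4⟩
    calc |x ^ j| = |x| ^ j := abs_pow x j
      _ ≤ A ^ j := pow_le_pow_left₀ (abs_nonneg x) hxA j
      _ ≤ A ^ j ⊔ 1 := le_sup_left
  have h3 : ((f n).roots.map (fun _ => A ^ j ⊔ 1)).sum
      = ((f n).natDegree : ℝ) * (A ^ j ⊔ 1) := by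
    rw [Multiset.map_const', Multiset.sum_replicate, hsplit n, nsmul_eq_mul]
  rw [Real.rpow_one, Real.norm_eq_abs, Real.norm_eq_abs,
    abs_of_nonneg (by positivity : (0:ℝ) ≤ ((f n).natDegree : ℝ))]
  calc |((f n).roots.map (fun x => x ^ j)).sum| ≤ ((f n).natDegree : ℝ) * (A ^ j ⊔ 1) :=
        (h1.trans h2).trans_eq h3
    _ = (A ^ j ⊔ 1) * ((f n).natDegree : ℝ) := mul_comm _ _

noncomputable def aa (s : ℕ) : ℝ := (-1) ^ s / ((2 * s).doubleFactorial : ℝ)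

theorem aa_rec (s : ℕ) : ((2 * s + 2 : ℕ) : ℝ) * aa (s + 1) = -aa s := by
  have h : (2 * (s + 1)).doubleFactorial = (2 * s + 2) * (2 * s).doubleFactorial := by
    have h2 : 2 * (s + 1) = (2 * s) + 2 := by ring
    rw [h2, Nat.doubleFactorial_add_two]
  have h0 : ((2 * s).doubleFactorial : ℝ) ≠ 0 := by
    exact_mod_cast (Nat.doubleFactorial_pos _).ne'
  have h1 : ((2 * s + 2 : ℕ) : ℝ) ≠ 0 := by positivity
  unfold aa
  rw [h]
  push_cast
  field_simp
  ring

theorem aa_ne (s : ℕ) : aa s ≠ 0 := by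
  unfold aa
  have h0 : ((2 * s).doubleFactorial : ℝ) ≠ 0 := by
    exact_mod_cast (Nat.doubleFactorial_pos _).ne'
  positivity

theorem littleo_of_const_mul {c : ℝ} {f g : ℕ → ℝ} (hc : c ≠ 0)
    (h : (fun n => c * f n) =o[atTop] g) : f =o[atTop] g := by
  have h2 := h.const_mul_left c⁻¹
  refine h2.congr (fun n => ?_) fun n => rfl
  field_simp

variable {D p1 p2 Ee : ℕ → ℝ}

theorem Ebound_even (hD : Tendsto D atTop atTop) (t : ℕ)
    (hP : (fun n => Ee n - aa t * p2 n ^ t) =o[atTop] fun n => D n ^ ((t : ℝ) - 1/3))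
    (hp2 : p2 =O[atTop] fun n => D n ^ (1 : ℝ)) :
    Ee =O[atTop] fun n => D n ^ (t : ℝ) := by
  have h1 : (fun n => Ee n - aa t * p2 n ^ t) =O[atTop] fun n => D n ^ (t : ℝ) :=
    hP.isBigO.trans (scale_le hD (by linarith))
  have h2 : (fun n => p2 n ^ t) =O[atTop] fun n => D n ^ (t : ℝ) := by
    have h3 := hp2.pow t
    refine h3.trans (IsBigO.of_bound 1 ?_)
    filter_upwards [hD.eventually_ge_atTop 0] with n hn
    rw [← Real.rpow_natCast (D n ^ (1:ℝ)) t, ← Real.rpow_mul hn, one_mul, one_mul]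
  have := h1.add (h2.const_mul_left (aa t))
  refine this.congr (fun n => by ring) fun n => rfl

theorem Ebound_odd (hD : Tendsto D atTop atTop) (t : ℕ)
    (hQ : (fun n => Ee n - aa t * p1 n * p2 n ^ t) =o[atTop] fun n => D n ^ (t : ℝ))
    (hp1 : p1 =o[atTop] fun n => D n ^ ((1 : ℝ)/3))
    (hp2 : p2 =O[atTop] fun n => D n ^ (1 : ℝ)) :
    Ee =o[atTop] fun n => D n ^ ((t : ℝ) + 1/3) := by
  have h1 : (fun n => Ee n - aa t * p1 n * p2 n ^ t) =o[atTop] fun n => D n ^ ((t:ℝ) + 1/3) :=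
    hQ.trans_isBigO (scale_le hD (by linarith))
  have h2 : (fun n => p2 n ^ t) =O[atTop] fun n => D n ^ (t : ℝ) := by
    have h3 := hp2.pow t
    refine h3.trans (IsBigO.of_bound 1 ?_)
    filter_upwards [hD.eventually_ge_atTop 0] with n hn
    rw [← Real.rpow_natCast (D n ^ (1:ℝ)) t, ← Real.rpow_mul hn, one_mul, one_mul]
  have h4 : (fun n => p1 n * p2 n ^ t) =o[atTop] fun n => D n ^ ((1:ℝ)/3 + (t:ℝ)) :=
    mul_oO hD hp1 h2
  have h5 : (fun n => aa t * (p1 n * p2 n ^ t)) =o[atTop] fun n => D n ^ ((t:ℝ) + 1/3) := by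
    have h6 := h4.const_mul_left (aa t)
    have h7 : (1:ℝ)/3 + (t:ℝ) = (t:ℝ) + 1/3 := by ring
    rwa [h7] at h6
  have := h1.add h5
  refine this.congr (fun n => by ring) fun n => rfl


theorem p2pow {D p2 : ℕ → ℝ} (hD : Tendsto D atTop atTop)
    (hp2 : p2 =O[atTop] fun n => D n ^ (1 : ℝ)) (t : ℕ) :
    (fun n => p2 n ^ t) =O[atTop] fun n => D n ^ (t : ℝ) := by
  have h3 := hp2.pow t
  refine h3.trans (IsBigO.of_bound 1 ?_)
  filter_upwards [hD.eventually_ge_atTop 0] with n hn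
  rw [← Real.rpow_natCast (D n ^ (1:ℝ)) t, ← Real.rpow_mul hn, one_mul, one_mul]

theorem sum_split (g : ℕ → ℝ) (m k : ℕ) (h : k = m + 2) :
    ∑ i ∈ Finset.range k, g i = (∑ i ∈ Finset.range m, g i) + (g m + g (m + 1)) := by
  subst h
  rw [show m + 2 = (m + 1) + 1 from rfl, Finset.sum_range_succ, Finset.sum_range_succ, add_assoc]

theorem master (A : ℝ) (hA : 0 < A) (f : ℕ → Polynomial ℝ)
    (hsplit : ∀ n, Multiset.card (f n).roots = (f n).natDegree)
    (hroots : ∀ n, ∀ x ∈ (f n).roots, x ∈ Set.Icc (-A) A)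
    (hdeg : Tendsto (fun n => (f n).natDegree) atTop atTop)
    (hp1 : (fun n => ((f n).roots.map (fun x => x ^ 1)).sum) =o[atTop]
      fun n => ((f n).natDegree : ℝ) ^ ((1 : ℝ) / 3))
    (hp3 : (fun n => ((f n).roots.map (fun x => x ^ 3)).sum) =o[atTop]
      fun n => ((f n).natDegree : ℝ)) :
    ∀ s : ℕ, ∀ t, t ≤ s →
      ((fun n => (f n).roots.esymm (2 * t) -
          aa t * (((f n).roots.map (fun x => x ^ 2)).sum) ^ t)
        =o[atTop] fun n => ((f n).natDegree : ℝ) ^ ((t : ℝ) - 1/3)) ∧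
      ((fun n => (f n).roots.esymm (2 * t + 1) -
          aa t * (((f n).roots.map (fun x => x ^ 1)).sum) *
            (((f n).roots.map (fun x => x ^ 2)).sum) ^ t)
        =o[atTop] fun n => ((f n).natDegree : ℝ) ^ (t : ℝ)) := by
  set D : ℕ → ℝ := fun n => ((f n).natDegree : ℝ) with hDdef
  have hD : Tendsto D atTop atTop := tendsto_natCast_atTop_atTop.comp hdeg
  set p : ℕ → ℕ → ℝ := fun j n => ((f n).roots.map (fun x => x ^ j)).sum with hpdef
  set E : ℕ → ℕ → ℝ := fun k n => (f n).roots.esymm k with hEdef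
  have hpO : ∀ j : ℕ, (fun n => p j n) =O[atTop] fun n => D n ^ (1:ℝ) :=
    fun j => p_bigO A hA f hsplit hroots j
  have hp1o : (fun n => p 1 n) =o[atTop] fun n => D n ^ ((1:ℝ)/3) := hp1
  have hp3o : (fun n => p 3 n) =o[atTop] fun n => D n ^ (1:ℝ) := by
    refine hp3.congr' EventuallyEq.rfl ?_
    exact Eventually.of_forall fun n => (Real.rpow_one _).symm
  have hnewton : ∀ k : ℕ, ∀ n, (k : ℝ) * E k n =
      ∑ i ∈ Finset.range k, (-1 : ℝ) ^ (k + 1 + i) * E i n * p (k - i) n :=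
    fun k n => newton_range (f n).roots k
  intro s
  induction s with
  | zero =>
    intro t ht
    interval_cases t
    constructor
    · refine (isLittleO_zero _ _).congr (fun n => ?_) fun n => rfl
      simp [aa, Multiset.esymm, Multiset.powersetCard_zero_left]
    · refine (isLittleO_zero _ _).congr (fun n => ?_) fun n => rfl
      have h1 : (f n).roots.esymm 1 = ((f n).roots.map (fun x => x ^ 1)).sum := by
        rw [Multiset.esymm, Multiset.powersetCard_one, Multiset.map_map]
        congr 1
        refine Multiset.map_congr rfl fun x _ => ?_
        simp
      simp [aa, h1, Nat.doubleFactorial]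
  | succ s IH =>
    have hcast1 : ∀ t : ℕ, t ≤ s → ((fun n => E (2 * t) n -
        aa t * (p 2 n) ^ t) =o[atTop] fun n => D n ^ ((t : ℝ) - 1/3)) ∧
        ((fun n => E (2 * t + 1) n - aa t * p 1 n * (p 2 n) ^ t)
          =o[atTop] fun n => D n ^ (t : ℝ)) := IH
    have hp2O := hpO 2
    have Pnew' : (fun n => E (2 * s + 2) n - aa (s + 1) * (p 2 n) ^ (s + 1))
        =o[atTop] fun n => D n ^ ((s : ℝ) + 2/3) := by
      refine littleo_of_const_mul (c := ((2 * s + 2 : ℕ) : ℝ)) (by positivity) ?_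
      have hTail : (fun n => ∑ i ∈ Finset.range (2 * s),
          (-1 : ℝ) ^ (2 * s + 2 + 1 + i) * E i n * p (2 * s + 2 - i) n)
          =o[atTop] fun n => D n ^ ((s : ℝ) + 2/3) := by
        refine IsLittleO.fun_sum fun i hi => ?_
        have hi' : i < 2 * s := Finset.mem_range.mp hi
        obtain ⟨t, rfl | rfl⟩ := Nat.even_or_odd' i
        · -- even index
          have ht : t + 1 ≤ s := by omega
          have hE : (fun n => E (2 * t) n) =O[atTop] fun n => D n ^ (t : ℝ) :=
            Ebound_even hD t (hcast1 t (by omega)).1 hp2O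
          have h1 : (fun n => E (2 * t) n * p (2 * s + 2 - 2 * t) n) =O[atTop]
              fun n => D n ^ ((t : ℝ) + 1) := mul_OO hD hE (hpO _)
          have h2 := h1.trans_isLittleO (scale_lt hD (show (t : ℝ) + 1 < (s : ℝ) + 2/3 by
            have : (t : ℝ) + 1 ≤ (s : ℝ) := by exact_mod_cast ht
            linarith))
          refine (h2.const_mul_left ((-1 : ℝ) ^ (2 * s + 2 + 1 + 2 * t))).congr
            (fun n => (mul_assoc _ _ _).symm) fun n => rfl
        · -- odd index
          have ht : t + 1 ≤ s := by omega
          have hE : (fun n => E (2 * t + 1) n) =o[atTop] fun n => D n ^ ((t : ℝ) + 1/3) :=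
            Ebound_odd hD t (hcast1 t (by omega)).2 hp1o hp2O
          have h1 : (fun n => E (2 * t + 1) n * p (2 * s + 2 - (2 * t + 1)) n) =o[atTop]
              fun n => D n ^ (((t : ℝ) + 1/3) + 1) := mul_oO hD hE (hpO _)
          have h2 := h1.trans_isBigO (scale_le hD (show (t : ℝ) + 1/3 + 1 ≤ (s : ℝ) + 2/3 by
            have : (t : ℝ) + 1 ≤ (s : ℝ) := by exact_mod_cast ht
            linarith))
          refine (h2.const_mul_left ((-1 : ℝ) ^ (2 * s + 2 + 1 + (2 * t + 1)))).congr
            (fun n => (mul_assoc _ _ _).symm) fun n => rfl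
      have hA1 : (fun n => (E (2 * s + 1) n - aa s * p 1 n * (p 2 n) ^ s) * p 1 n)
          =o[atTop] fun n => D n ^ ((s : ℝ) + 2/3) := by
        have h1 := mul_oO hD (hcast1 s le_rfl).2 hp1o.isBigO
        exact h1.trans_isBigO (scale_le hD (by norm_num))
      have hA2 : (fun n => aa s * (p 1 n * p 1 n * (p 2 n) ^ s))
          =o[atTop] fun n => D n ^ ((s : ℝ) + 2/3) := by
        have h1 : (fun n => p 1 n * p 1 n) =o[atTop] fun n => D n ^ ((1:ℝ)/3 + (1:ℝ)/3) :=
          mul_oO hD hp1o hp1o.isBigO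
        have h2 : (fun n => (p 2 n) ^ s) =O[atTop] fun n => D n ^ (s : ℝ) := p2pow hD hp2O s
        have h3 := mul_oO hD h1 h2
        have h4 := h3.trans_isBigO (scale_le hD (show (1:ℝ)/3 + 1/3 + (s:ℝ) ≤ (s : ℝ) + 2/3 by
          linarith))
        exact (h4.const_mul_left (aa s)).congr (fun n => by ring) fun n => rfl
      have hB : (fun n => (-(E (2 * s) n - aa s * (p 2 n) ^ s)) * p 2 n)
          =o[atTop] fun n => D n ^ ((s : ℝ) + 2/3) := by
        have h1 := mul_oO hD (hcast1 s le_rfl).1.neg_left hp2O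
        exact h1.trans_isBigO (scale_le hD (by linarith))
      have hsum := ((hTail.add hA1).add hA2).add hB
      refine hsum.congr (fun n => ?_) fun n => rfl
      have hN := (hnewton (2 * s + 2) n).trans
        (sum_split (fun i => (-1 : ℝ) ^ (2 * s + 2 + 1 + i) * E i n * p (2 * s + 2 - i) n)
          (2 * s) (2 * s + 2) rfl)
      simp only [show 2 * s + 2 - 2 * s = 2 from by omega,
        show 2 * s + 2 - (2 * s + 1) = 1 from by omega,
        show (-1 : ℝ) ^ (2 * s + 2 + 1 + 2 * s) = -1 from Odd.neg_one_pow ⟨2 * s + 1, by ring⟩,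
        show (-1 : ℝ) ^ (2 * s + 2 + 1 + (2 * s + 1)) = 1 from
          Even.neg_one_pow ⟨2 * s + 2, by ring⟩] at hN
      linear_combination (p 2 n) ^ (s + 1) * aa_rec s - hN
    have Pnew : (fun n => E (2 * (s+1)) n - aa (s+1) * (p 2 n) ^ (s+1))
        =o[atTop] fun n => D n ^ (((s+1 : ℕ) : ℝ) - 1/3) := by
      rw [show ((s+1 : ℕ) : ℝ) - 1/3 = (s : ℝ) + 2/3 from by push_cast; ring]
      refine Pnew'.congr (fun n => ?_) fun n => rfl
      rw [show 2 * (s+1) = 2 * s + 2 from by ring]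
    have Qnew' : (fun n => E (2 * s + 3) n - aa (s + 1) * p 1 n * (p 2 n) ^ (s + 1))
        =o[atTop] fun n => D n ^ ((s : ℝ) + 1) := by
      refine littleo_of_const_mul (c := ((2 * s + 3 : ℕ) : ℝ)) (by positivity) ?_
      have hTail : (fun n => ∑ i ∈ Finset.range (2 * s + 1),
          (-1 : ℝ) ^ (2 * s + 3 + 1 + i) * E i n * p (2 * s + 3 - i) n)
          =o[atTop] fun n => D n ^ ((s : ℝ) + 1) := by
        refine IsLittleO.fun_sum fun i hi => ?_
        have hi' : i < 2 * s + 1 := Finset.mem_range.mp hi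
        obtain ⟨t, rfl | rfl⟩ := Nat.even_or_odd' i
        · -- even index
          have ht : t ≤ s := by omega
          have hE : (fun n => E (2 * t) n) =O[atTop] fun n => D n ^ (t : ℝ) :=
            Ebound_even hD t (hcast1 t ht).1 hp2O
          by_cases hts : t = s
          · subst hts
            have h1 : (fun n => E (2 * t) n * p (2 * t + 3 - 2 * t) n) =o[atTop]
                fun n => D n ^ ((t : ℝ) + 1) := by
              rw [show 2 * t + 3 - 2 * t = 3 from by omega]
              exact mul_Oo hD hE hp3o
            refine (h1.const_mul_left ((-1 : ℝ) ^ (2 * t + 3 + 1 + 2 * t))).congr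
              (fun n => (mul_assoc _ _ _).symm) fun n => rfl
          · have ht' : t + 1 ≤ s := by omega
            have h1 : (fun n => E (2 * t) n * p (2 * s + 3 - 2 * t) n) =O[atTop]
                fun n => D n ^ ((t : ℝ) + 1) := mul_OO hD hE (hpO _)
            have h2 := h1.trans_isLittleO (scale_lt hD (show (t : ℝ) + 1 < (s : ℝ) + 1 by
              have : (t : ℝ) + 1 ≤ (s : ℝ) := by exact_mod_cast ht'
              linarith))
            refine (h2.const_mul_left ((-1 : ℝ) ^ (2 * s + 3 + 1 + 2 * t))).congr
              (fun n => (mul_assoc _ _ _).symm) fun n => rfl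
        · -- odd index
          have ht : t + 1 ≤ s := by omega
          have hE : (fun n => E (2 * t + 1) n) =o[atTop] fun n => D n ^ ((t : ℝ) + 1/3) :=
            Ebound_odd hD t (hcast1 t (by omega)).2 hp1o hp2O
          have h1 : (fun n => E (2 * t + 1) n * p (2 * s + 3 - (2 * t + 1)) n) =o[atTop]
              fun n => D n ^ (((t : ℝ) + 1/3) + 1) := mul_oO hD hE (hpO _)
          have h2 := h1.trans_isBigO (scale_le hD (show (t : ℝ) + 1/3 + 1 ≤ (s : ℝ) + 1 by
            have : (t : ℝ) + 1 ≤ (s : ℝ) := by exact_mod_cast ht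
            linarith))
          refine (h2.const_mul_left ((-1 : ℝ) ^ (2 * s + 3 + 1 + (2 * t + 1)))).congr
            (fun n => (mul_assoc _ _ _).symm) fun n => rfl
      have hA1 : (fun n => (E (2 * s + 2) n - aa (s + 1) * (p 2 n) ^ (s + 1)) * p 1 n)
          =o[atTop] fun n => D n ^ ((s : ℝ) + 1) := by
        have h1 := mul_oO hD Pnew' hp1o.isBigO
        exact h1.trans_isBigO (scale_le hD (by linarith))
      have hB1 : (fun n => (-(E (2 * s + 1) n - aa s * p 1 n * (p 2 n) ^ s)) * p 2 n)
          =o[atTop] fun n => D n ^ ((s : ℝ) + 1) :=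
        mul_oO hD (hcast1 s le_rfl).2.neg_left hp2O
      have hsum := (hTail.add hA1).add hB1
      refine hsum.congr (fun n => ?_) fun n => rfl
      have hN := (hnewton (2 * s + 3) n).trans
        (sum_split (fun i => (-1 : ℝ) ^ (2 * s + 3 + 1 + i) * E i n * p (2 * s + 3 - i) n)
          (2 * s + 1) (2 * s + 3) (by omega))
      simp only [show 2 * s + 3 - (2 * s + 1) = 2 from by omega,
        show 2 * s + 3 - (2 * s + 2) = 1 from by omega,
        show 2 * s + 1 + 1 = 2 * s + 2 from by omega,
        show (-1 : ℝ) ^ (2 * s + 3 + 1 + (2 * s + 1)) = -1 from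
          Odd.neg_one_pow ⟨2 * s + 2, by ring⟩,
        show (-1 : ℝ) ^ (2 * s + 3 + 1 + (2 * s + 2)) = 1 from
          Even.neg_one_pow ⟨2 * s + 3, by ring⟩] at hN
      have hc : ((2 * s + 3 : ℕ) : ℝ) = ((2 * s + 2 : ℕ) : ℝ) + 1 := by push_cast; ring
      linear_combination p 1 n * (p 2 n) ^ (s + 1) * aa_rec s - hN +
        aa (s + 1) * p 1 n * (p 2 n) ^ (s + 1) * hc
    have Qnew : (fun n => E (2 * (s+1) + 1) n - aa (s+1) * p 1 n * (p 2 n) ^ (s+1))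
        =o[atTop] fun n => D n ^ (((s+1 : ℕ) : ℝ)) := by
      rw [show ((s+1 : ℕ) : ℝ) = (s : ℝ) + 1 from by push_cast; ring]
      refine Qnew'.congr (fun n => ?_) fun n => rfl
      rw [show 2 * (s+1) + 1 = 2 * s + 3 from by ring]
    intro t ht
    rcases Nat.lt_or_ge t (s+1) with h | h
    · exact IH t (Nat.lt_succ_iff.mp h)
    · have : t = s + 1 := le_antisymm ht h
      subst this
      exact ⟨Pnew, Qnew⟩

theorem esymm_one' (s : Multiset ℝ) : s.esymm 1 = (s.map (fun x => x ^ 1)).sum := by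
  rw [Multiset.esymm, Multiset.powersetCard_one, Multiset.map_map]
  congr 1
  refine Multiset.map_congr rfl fun x _ => ?_
  simp

/-- Under the same hypotheses as for the even-indexed coefficients, the odd-indexed
coefficient `c_{2r+1}(fₙ)` satisfies
`c_{2r+1}(fₙ) = c₁(fₙ) ⬝ ((-1)^r / (2r)!!) ⬝ p₂(fₙ)^r + o(dₙ^r)`. -/
theorem coeff_two_r_add_one_asymptotic (r : ℕ) (A α₀ : ℝ) (hA : 0 < A) (hα : 0 < α₀)
    (f : ℕ → Polynomial ℝ)
    (hmonic : ∀ n, (f n).Monic)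
    (hsplit : ∀ n, Multiset.card (f n).roots = (f n).natDegree)
    (hroots : ∀ n, ∀ x ∈ (f n).roots, x ∈ Set.Icc (-A) A)
    (hdeg : Tendsto (fun n => (f n).natDegree) atTop atTop)
    (hp1 : (fun n => ((f n).roots.map (fun x => x ^ 1)).sum) =o[atTop]
      fun n => ((f n).natDegree : ℝ) ^ ((1 : ℝ) / 3))
    (hp3 : (fun n => ((f n).roots.map (fun x => x ^ 3)).sum) =o[atTop]
      fun n => ((f n).natDegree : ℝ))
    (hp2 : ∀ n, α₀ ^ 2 * ((f n).natDegree : ℝ) ≤ ((f n).roots.map (fun x => x ^ 2)).sum) :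
    (fun n => (f n).coeff ((f n).natDegree - (2 * r + 1)) -
        (f n).coeff ((f n).natDegree - 1) *
          ((-1 : ℝ) ^ r / (Nat.doubleFactorial (2 * r) : ℝ)) * (((f n).roots.map (fun x => x ^ 2)).sum) ^ r)
      =o[atTop] fun n => ((f n).natDegree : ℝ) ^ r := by
  have key := (master A hA f hsplit hroots hdeg hp1 hp3 r r le_rfl).2
  have hgoal := key.neg_left
  have hev : ∀ᶠ n in atTop, 2 * r + 1 ≤ (f n).natDegree := hdeg.eventually_ge_atTop (2 * r + 1)
  refine hgoal.congr' ?_ ?_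
  · filter_upwards [hev] with n hn
    have hd1 : 1 ≤ (f n).natDegree := by omega
    have hc1 : (f n).coeff ((f n).natDegree - (2 * r + 1)) =
        -((f n).roots.esymm (2 * r + 1)) := by
      have h := Polynomial.coeff_eq_esymm_roots_of_card (hsplit n)
        (k := (f n).natDegree - (2 * r + 1)) (Nat.sub_le _ _)
      rw [Nat.sub_sub_self hn] at h
      rw [h, (hmonic n).leadingCoeff, one_mul,
        show (-1 : ℝ) ^ (2 * r + 1) = -1 from Odd.neg_one_pow ⟨r, by ring⟩]
      ring
    have hc2 : (f n).coeff ((f n).natDegree - 1) =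
        -(((f n).roots.map (fun x => x ^ 1)).sum) := by
      have h := Polynomial.coeff_eq_esymm_roots_of_card (hsplit n)
        (k := (f n).natDegree - 1) (Nat.sub_le _ _)
      rw [Nat.sub_sub_self hd1] at h
      rw [h, (hmonic n).leadingCoeff, one_mul, pow_one, esymm_one']
      ring
    rw [hc1, hc2]
    unfold aa
    ring
  · exact Eventually.of_forall fun n => Real.rpow_natCast _ _
end

section
/- Fix an integer r ≥ 0 and real numbers A > 0 and β > 0. Let (f_n)_{n≥1} be a sequence of monic polynomials in ℝ[X] such that every root of every f_n is real and lies in the interval [−A, A], and write d_n = deg f_n. Assume d_n → ∞ as n → ∞ and that p_1(f_n) ≥ β·d_n for all n. Then c_r(f_n) = ((−1)^r/r!)·(p_1(f_n))^r + O(d_n^{r−1}) as n → ∞. -/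
open Polynomial Filter Asymptotics


/-- Newton's identity for multisets of reals. -/
lemma multiset_newton (s : Multiset ℝ) (k : ℕ) :
    (k : ℝ) * s.esymm k = (-1 : ℝ) ^ (k + 1) *
      ∑ a ∈ Finset.HasAntidiagonal.antidiagonal k with a.1 < k,
        (-1 : ℝ) ^ a.1 * s.esymm a.1 * (s.map (· ^ a.2)).sum := by
  obtain ⟨l, rfl⟩ : ∃ l : List ℝ, (l : Multiset ℝ) = s := ⟨s.toList, s.coe_toList⟩
  have huniv : (Finset.univ.val.map l.get) = (l : Multiset ℝ) := by
    rw [Fin.univ_val_map]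
    simp [List.ofFn_get]
  have key := congrArg (MvPolynomial.aeval l.get)
    (MvPolynomial.mul_esymm_eq_sum (Fin l.length) ℝ k)
  simp only [map_mul, map_sum, map_pow, map_natCast, map_neg, map_one,
    MvPolynomial.aeval_esymm_eq_multiset_esymm, huniv, MvPolynomial.psum,
    MvPolynomial.aeval_X] at key
  convert key using 3 with a ha
  congr 1
  show ((l : Multiset ℝ).map (· ^ a.2)).sum = ∑ i : Fin l.length, l.get i ^ a.2
  rw [Finset.sum, ← huniv, Multiset.map_map]
  rfl


lemma ms_abs_prod (s : Multiset ℝ) {A : ℝ} (hA : 0 ≤ A) (h : ∀ x ∈ s, |x| ≤ A) :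
    |s.prod| ≤ A ^ Multiset.card s := by
  induction s using Multiset.induction with
  | empty => simp
  | cons a s ih =>
    simp only [Multiset.prod_cons, Multiset.card_cons, abs_mul, pow_succ']
    exact mul_le_mul (h a (Multiset.mem_cons_self a s))
      (ih fun x hx => h x (Multiset.mem_cons_of_mem hx)) (abs_nonneg _)
      hA

lemma ms_abs_sum (s : Multiset ℝ) {B : ℝ} (h : ∀ x ∈ s, |x| ≤ B) :
    |s.sum| ≤ (Multiset.card s : ℝ) * B := by
  induction s using Multiset.induction with
  | empty =>
    simp
  | cons a s ih =>
    simp only [Multiset.sum_cons, Multiset.card_cons]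
    calc |a + s.sum| ≤ |a| + |s.sum| := abs_add_le _ _
    _ ≤ B + (Multiset.card s : ℝ) * B :=
        add_le_add (h a (Multiset.mem_cons_self a s))
          (ih fun x hx => h x (Multiset.mem_cons_of_mem hx))
    _ = ((Multiset.card s : ℝ) + 1) * B := by ring
    _ = _ := by push_cast; ring

lemma abs_esymm_le {A : ℝ} (hA : 1 ≤ A) (s : Multiset ℝ) (h : ∀ x ∈ s, |x| ≤ A) (k : ℕ) :
    |s.esymm k| ≤ A ^ k * ((Multiset.card s : ℝ) + 1) ^ k := by
  have hA0 : (0:ℝ) ≤ A := le_trans zero_le_one hA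
  have h1 : ∀ y ∈ (s.powersetCard k).map Multiset.prod, |y| ≤ A ^ k := by
    intro y hy
    obtain ⟨t, ht, rfl⟩ := Multiset.mem_map.1 hy
    have hcard := (Multiset.mem_powersetCard.1 ht).2
    have hle := (Multiset.mem_powersetCard.1 ht).1
    have := ms_abs_prod t hA0 (fun x hx => h x (Multiset.mem_of_le hle hx))
    rwa [hcard] at this
  have h2 := ms_abs_sum _ h1
  rw [Multiset.esymm]
  refine le_trans h2 ?_
  rw [Multiset.card_map, Multiset.card_powersetCard]
  rw [mul_comm (A ^ k)]
  refine mul_le_mul ?_ le_rfl (by positivity) (by positivity)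
  calc ((Multiset.card s).choose k : ℝ) ≤ ((Multiset.card s) ^ k : ℕ) := by
        exact_mod_cast Nat.choose_le_pow _ _
  _ ≤ ((Multiset.card s : ℝ) + 1) ^ k := by
        push_cast
        exact pow_le_pow_left₀ (by positivity) (by linarith) k

lemma abs_psum_le {A : ℝ} (hA : 1 ≤ A) (s : Multiset ℝ) (h : ∀ x ∈ s, |x| ≤ A) (k : ℕ) :
    |(s.map (· ^ k)).sum| ≤ ((Multiset.card s : ℝ) + 1) * A ^ k := by
  have h1 : ∀ y ∈ s.map (· ^ k), |y| ≤ A ^ k := by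
    intro y hy
    obtain ⟨x, hx, rfl⟩ := Multiset.mem_map.1 hy
    rw [abs_pow]
    exact pow_le_pow_left₀ (abs_nonneg _) (h x hx) k
  refine le_trans (ms_abs_sum _ h1) ?_
  rw [Multiset.card_map]
  have : (0:ℝ) ≤ A ^ k := by positivity
  nlinarith [Nat.cast_nonneg (α := ℝ) (Multiset.card s)]
lemma key_est {A : ℝ} (hA : 1 ≤ A) (r : ℕ) : ∃ C : ℝ, 0 ≤ C ∧ ∀ s : Multiset ℝ,
    (∀ x ∈ s, |x| ≤ A) →
    |s.esymm r - ((s.map (· ^ 1)).sum) ^ r / (r.factorial : ℝ)|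
      ≤ C * (((Multiset.card s : ℝ) + 1) ^ r / ((Multiset.card s : ℝ) + 1)) := by
  have hA0 : (0:ℝ) < A := lt_of_lt_of_le zero_lt_one hA
  induction r with
  | zero => exact ⟨0, le_rfl, fun s hs => by simp [Multiset.esymm]⟩
  | succ r ih =>
    obtain ⟨C, hC0, hC⟩ := ih
    refine ⟨((r:ℝ)+2) * A^(r+1) + C * A, by positivity, fun s hs => ?_⟩
    set d1 : ℝ := (Multiset.card s : ℝ) + 1 with hd1def
    have hd1 : 1 ≤ d1 := by
      have : (0:ℝ) ≤ (Multiset.card s : ℝ) := Nat.cast_nonneg _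
      linarith
    have hd1pos : 0 < d1 := lt_of_lt_of_le zero_lt_one hd1
    set p1 : ℝ := ((s.map (· ^ 1)).sum) with hp1def
    have hp1 : |p1| ≤ d1 * A := by
      have := abs_psum_le hA s hs 1
      rw [pow_one] at this
      calc |p1| ≤ ((Multiset.card s : ℝ) + 1) * A := this
        _ = d1 * A := by rw [hd1def]
    -- Newton's identity, separating the (r,1) term
    set T := ({a ∈ Finset.HasAntidiagonal.antidiagonal (r+1) | a.1 < r+1} : Finset (ℕ × ℕ)) with hT
    have hmem : ((r, 1) : ℕ × ℕ) ∈ T := by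
      simp [hT, Finset.mem_filter, Finset.mem_antidiagonal]
    set g : ℕ × ℕ → ℝ := fun a => (-1 : ℝ) ^ a.1 * s.esymm a.1 * (s.map (· ^ a.2)).sum with hg
    set S : ℝ := ∑ a ∈ T.erase (r, 1), g a with hSdef
    have newton := multiset_newton s (r+1)
    have hsplit : ∑ a ∈ T, g a = g (r, 1) + S := (Finset.add_sum_erase T g hmem).symm
    have hsign : ((-1:ℝ))^(r+1+1) * (-1)^r = 1 := by
      rw [← pow_add]
      have h2 : r+1+1+r = 2*(r+1) := by ring
      rw [h2, pow_mul]; norm_num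
    have h1 : ((r:ℝ)+1) * s.esymm (r+1) - s.esymm r * p1 = (-1:ℝ)^(r+1+1) * S := by
      have : ((r:ℝ)+1) * s.esymm (r+1) = (-1:ℝ)^(r+1+1) * (g (r,1) + S) := by
        rw [← hsplit]
        push_cast at newton ⊢
        exact newton
      have hg1 : g (r, 1) = (-1:ℝ)^r * s.esymm r * p1 := rfl
      rw [this, hg1]
      linear_combination (s.esymm r * p1) * hsign
    -- bound S
    have hterm : ∀ a ∈ T.erase (r,1), |g a| ≤ A^(r+1) * d1^r := by
      intro a ha
      have hne := Finset.ne_of_mem_erase ha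
      have ha' := Finset.mem_of_mem_erase ha
      rw [hT, Finset.mem_filter, Finset.HasAntidiagonal.mem_antidiagonal] at ha'
      obtain ⟨hsum, hlt⟩ := ha'
      have ha2 : 2 ≤ a.2 := by
        rcases Nat.lt_or_ge a.2 2 with h | h
        · interval_cases h2 : a.2
          · omega
          · exfalso; apply hne; have : a.1 = r := by omega
            exact Prod.ext this h2
        · exact h
      have ha1 : a.1 + 1 ≤ r := by omega
      have habs : |g a| = |s.esymm a.1| * |(s.map (· ^ a.2)).sum| := by
        rw [hg]
        simp only []
        rw [abs_mul, abs_mul, abs_pow, abs_neg, abs_one, one_pow, one_mul]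
      rw [habs]
      calc |s.esymm a.1| * |(s.map (· ^ a.2)).sum|
          ≤ (A ^ a.1 * d1 ^ a.1) * (d1 * A ^ a.2) := by
            exact mul_le_mul (abs_esymm_le hA s hs a.1) (abs_psum_le hA s hs a.2)
              (abs_nonneg _) (by positivity)
        _ = A ^ (a.1 + a.2) * d1 ^ (a.1 + 1) := by rw [pow_add, pow_add, pow_one]; ring
        _ = A ^ (r+1) * d1 ^ (a.1+1) := by rw [hsum]
        _ ≤ A ^ (r+1) * d1 ^ r := by
            refine mul_le_mul_of_nonneg_left ?_ (by positivity)
            exact pow_le_pow_right₀ hd1 ha1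
    have hcard : ((T.erase (r,1)).card : ℝ) ≤ (r:ℝ) + 2 := by
      have h1 : (T.erase (r,1)).card ≤ T.card := Finset.card_erase_le
      have h2 : T.card ≤ (Finset.HasAntidiagonal.antidiagonal (r+1)).card := Finset.card_filter_le _ _
      have h3 : (Finset.HasAntidiagonal.antidiagonal (r+1)).card = r + 2 := by
        rw [Finset.Nat.card_antidiagonal]
      have : (T.erase (r,1)).card ≤ r + 2 := by omega
      exact_mod_cast this
    have hS : |S| ≤ ((r:ℝ)+2) * (A^(r+1) * d1^r) := by
      calc |S| ≤ ∑ a ∈ T.erase (r,1), |g a| := Finset.abs_sum_le_sum_abs _ _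
        _ ≤ ∑ _a ∈ T.erase (r,1), A^(r+1) * d1^r := Finset.sum_le_sum hterm
        _ = ((T.erase (r,1)).card : ℝ) * (A^(r+1) * d1^r) := by
            rw [Finset.sum_const, nsmul_eq_mul]
        _ ≤ ((r:ℝ)+2) * (A^(r+1) * d1^r) := by
            refine mul_le_mul_of_nonneg_right hcard (by positivity)
    -- combine
    have hkpos : (0:ℝ) < (r:ℝ) + 1 := by positivity
    have heq : s.esymm (r+1) - p1^(r+1) / ((r+1).factorial : ℝ)
        = (1/((r:ℝ)+1)) * ((((r:ℝ)+1) * s.esymm (r+1) - s.esymm r * p1)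
            + (s.esymm r - p1^r/(r.factorial : ℝ)) * p1) := by
      have hfac : (((r+1).factorial : ℝ)) = ((r:ℝ)+1) * (r.factorial : ℝ) := by
        rw [Nat.factorial_succ]; push_cast; ring
      have hfacpos : (0:ℝ) < (r.factorial : ℝ) := by
        exact_mod_cast Nat.factorial_pos r
      rw [hfac]
      field_simp
      ring
    rw [heq]
    have hCest : |(s.esymm r - p1^r/(r.factorial : ℝ)) * p1| ≤ C * A * d1^r := by
      rw [abs_mul]
      calc |s.esymm r - p1^r/(r.factorial : ℝ)| * |p1|
          ≤ (C * (d1^r / d1)) * (d1 * A) :=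
            mul_le_mul (hC s hs) hp1 (abs_nonneg _) (by positivity)
        _ = C * A * d1^r := by field_simp
    have hSest : |(((r:ℝ)+1) * s.esymm (r+1) - s.esymm r * p1)| ≤ ((r:ℝ)+2) * (A^(r+1) * d1^r) := by
      rw [h1, abs_mul, abs_pow, abs_neg, abs_one, one_pow, one_mul]
      exact hS
    have htotal : |(1/((r:ℝ)+1)) * ((((r:ℝ)+1) * s.esymm (r+1) - s.esymm r * p1)
            + (s.esymm r - p1^r/(r.factorial : ℝ)) * p1)|
        ≤ (((r:ℝ)+2) * A^(r+1) + C * A) * d1^r := by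
      rw [abs_mul, abs_div, abs_one]
      have h1le : |((r:ℝ)+1)| = (r:ℝ)+1 := abs_of_pos hkpos
      rw [h1le]
      have habs2 : |(((r:ℝ)+1) * s.esymm (r+1) - s.esymm r * p1)
            + (s.esymm r - p1^r/(r.factorial : ℝ)) * p1|
          ≤ ((r:ℝ)+2) * (A^(r+1) * d1^r) + C * A * d1^r :=
        le_trans (abs_add_le _ _) (add_le_add hSest hCest)
      have hone : 1/((r:ℝ)+1) ≤ 1 := by
        rw [div_le_one hkpos]; linarith
      calc 1/((r:ℝ)+1) * |_| ≤ 1 * (((r:ℝ)+2) * (A^(r+1) * d1^r) + C * A * d1^r) :=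
            mul_le_mul hone habs2 (abs_nonneg _) zero_le_one
        _ = (((r:ℝ)+2) * A^(r+1) + C * A) * d1^r := by ring
    refine le_trans htotal ?_
    have : d1 ^ (r+1) / d1 = d1 ^ r := by
      rw [pow_succ]; field_simp
    rw [this]


/-- For a sequence of monic real polynomials `fₙ`, all of whose roots are real and lie
in `[-A, A]`, with `dₙ → ∞` and `p₁(fₙ) ≥ β dₙ`, each coefficient satisfies
`c_r(fₙ) = ((-1)^r / r!) ⬝ p₁(fₙ)^r + O(dₙ^{r-1})`. -/
theorem coeff_asymptotic_positive_trace (r : ℕ) (A β : ℝ) (hA : 0 < A) (hβ : 0 < β)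
    (f : ℕ → Polynomial ℝ)
    (hmonic : ∀ n, (f n).Monic)
    (hsplit : ∀ n, Multiset.card (f n).roots = (f n).natDegree)
    (hroots : ∀ n, ∀ x ∈ (f n).roots, x ∈ Set.Icc (-A) A)
    (hdeg : Tendsto (fun n => (f n).natDegree) atTop atTop)
    (hp1 : ∀ n, β * ((f n).natDegree : ℝ) ≤ ((f n).roots.map (fun x => x ^ 1)).sum) :
    (fun n => (f n).coeff ((f n).natDegree - r) -
        ((-1 : ℝ) ^ r / (r.factorial : ℝ)) * (((f n).roots.map (fun x => x ^ 1)).sum) ^ r)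
      =O[atTop] fun n => ((f n).natDegree : ℝ) ^ ((r : ℝ) - 1) := by
  have hA' : (1:ℝ) ≤ max A 1 := le_max_right _ _
  obtain ⟨C, hC0, hC⟩ := key_est hA' r
  rw [isBigO_iff]
  refine ⟨C * 2^r, ?_⟩
  have hev : ∀ᶠ n in atTop, max 1 r ≤ (f n).natDegree := hdeg.eventually_ge_atTop _
  filter_upwards [hev] with n hn
  set d := (f n).natDegree with hd
  have hr : r ≤ d := le_trans (le_max_right 1 r) hn
  have hd1 : 1 ≤ d := le_trans (le_max_left 1 r) hn
  have hb : ∀ x ∈ (f n).roots, |x| ≤ max A 1 := by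
    intro x hx
    have hxm := hroots n x hx
    rw [Set.mem_Icc] at hxm
    exact le_trans (abs_le.2 ⟨hxm.1, hxm.2⟩) (le_max_left _ _)
  have hcoeff : (f n).coeff (d - r) = (-1:ℝ)^r * (f n).roots.esymm r := by
    have h := Polynomial.coeff_eq_esymm_roots_of_card (hsplit n) (Nat.sub_le d r)
    rw [(hmonic n).leadingCoeff, one_mul, Nat.sub_sub_self hr] at h
    exact h
  set p1 := ((f n).roots.map (fun x => x ^ 1)).sum with hp1def
  have hlhs : (f n).coeff (d-r) - ((-1:ℝ)^r/(r.factorial:ℝ)) * p1^r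
      = (-1:ℝ)^r * ((f n).roots.esymm r - p1^r/(r.factorial:ℝ)) := by
    rw [hcoeff]; ring
  have hkey := hC (f n).roots hb
  rw [hsplit n] at hkey
  set dR : ℝ := (d : ℝ) with hdR
  have hdR1 : (1:ℝ) ≤ dR := by rw [hdR]; exact_mod_cast hd1
  have hdRpos : (0:ℝ) < dR := lt_of_lt_of_le zero_lt_one hdR1
  have hrpow : dR ^ ((r:ℝ) - 1) = dR ^ r / dR := by
    rw [Real.rpow_sub hdRpos, Real.rpow_natCast, Real.rpow_one]
  have hstep : C * ((dR + 1)^r / (dR + 1)) ≤ C * 2^r * (dR^r / dR) := by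
    have h1 : (dR + 1)^r ≤ (2*dR)^r := by
      apply pow_le_pow_left₀ (by linarith) (by linarith)
    have h2 : (dR + 1)^r / (dR + 1) ≤ (2*dR)^r / dR := by
      apply div_le_div₀ (by positivity) h1 hdRpos (by linarith)
    calc C * ((dR + 1)^r / (dR + 1)) ≤ C * ((2*dR)^r / dR) :=
          mul_le_mul_of_nonneg_left h2 hC0
      _ = C * 2^r * (dR^r / dR) := by rw [mul_pow]; ring
  calc ‖(f n).coeff (d-r) - ((-1:ℝ)^r/(r.factorial:ℝ)) * p1^r‖
      = |(f n).roots.esymm r - p1^r/(r.factorial:ℝ)| := by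
        rw [Real.norm_eq_abs, hlhs, abs_mul, abs_pow, abs_neg, abs_one, one_pow, one_mul]
    _ ≤ C * ((dR + 1)^r / (dR + 1)) := hkey
    _ ≤ C * 2^r * (dR^r / dR) := hstep
    _ = C * 2^r * ‖dR ^ ((r:ℝ) - 1)‖ := by
        rw [Real.norm_eq_abs, abs_of_nonneg (Real.rpow_nonneg (le_of_lt hdRpos) _), hrpow]
end
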